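/- Let B : ℝ → ℝ satisfy B(ω+1) = B(ω) for all ω ∈ ℝ and B(ω) = -log ω + ω·B(1/ω) for every irrational ω ∈ (0,1). Fix a natural number q ≥ 1 and a real β > 0, let γ = (√5−1)/2 and ω_n = 1/(q + 1/(n+γ)) for n ≥ 1, and let εc : ℝ → ℝ be a positive function such that for some C₁ > 0 one has |log εc(ω_n) + β·B(ω_n)| ≤ C₁ for all n ≥ 1. Then there exist constants 0 < c ≤ C such that c·n^(−β/q) ≤ εc(ω_n) ≤ C·n^(−β/q) for all n ≥ 1. -/

import Mathlib

/-!
Two steps of the Bryuno functional equation along `ω_n = [q, n, 1, 1, …]`, using periodicity to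
drop the integer parts `q` and `n`, give
`B(ω_n) = log (q + u) + (log (n + γ) + B(γ) / (n + γ)) / (q + u)` with `u = 1 / (n + γ)`,
which is `log n / q + O(1)`. Bryuno's interpolation formula then pins `log εc(ω_n)` down to
`-(β / q) log n + O(1)`, and exponentiating gives the scaling law.
-/

open Real

def IsBryunoType (B : ℝ → ℝ) : Prop :=
  Function.Periodic B 1 ∧
    ∀ ω ∈ Set.Ioo (0 : ℝ) 1, Irrational ω → B ω = -log ω + ω * B (1 / ω)

theorem abs_log_div_add_one_div_sub_log_div_le {q x t : ℝ} (hq : 1 ≤ q) (hx : 1 ≤ x)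
    (hxt : x ≤ t) (ht : t ≤ x + 1) : |log t / (q + 1 / t) - log x / q| ≤ 1 := by
  have ht0 : 0 < t := by linarith
  have hlogt : log t ≤ log x + 1 := by
    have hdiv := log_le_sub_one_of_pos (div_pos ht0 (by linarith : (0 : ℝ) < x))
    rw [log_div ht0.ne' (by linarith)] at hdiv
    have : t / x - 1 ≤ 1 := by
      rw [div_sub_one (by linarith), div_le_one (by linarith)]; linarith
    linarith
  have hlogx_lt : log x < t := by linarith [log_le_sub_one_of_pos (by linarith : (0 : ℝ) < x)]
  rw [abs_le]
  constructor
  · have hlower : log x / q - 1 ≤ log x / (q + 1 / t) := by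
      rw [div_sub_one (by positivity), div_le_div_iff₀ (by positivity) (by positivity)]
      field_simp
      -- with denominators cleared this reads `log x ≤ q ^ 2 * t + q`
      nlinarith [mul_le_mul_of_nonneg_right (one_le_mul_of_one_le_of_one_le hq hq) ht0.le]
    have : log x / (q + 1 / t) ≤ log t / (q + 1 / t) := by gcongr
    linarith
  · calc log t / (q + 1 / t) - log x / q ≤ log t / q - log x / q := by
          gcongr
          · exact log_nonneg (by linarith)
          · exact le_add_of_nonneg_right (by positivity)
      _ ≤ 1 / q := by rw [← sub_div]; gcongr; linarith
      _ ≤ 1 := (div_le_one (by linarith)).2 hq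

theorem rpow_neg_mul_le_and_le_of_abs_log_add_mul_log_le {x y a K : ℝ} (hx : 0 < x)
    (hy : 0 < y) (h : |log y + a * log x| ≤ K) :
    exp (-K) * x ^ (-a) ≤ y ∧ y ≤ exp K * x ^ (-a) := by
  rw [rpow_def_of_pos hx, ← exp_add, ← exp_add, ← exp_log hy, exp_le_exp, exp_le_exp]
  constructor <;> linarith [abs_le.1 h]

namespace IsBryunoType

variable {B : ℝ → ℝ}

theorem apply_one_div_natCast_add (hB : IsBryunoType B) {k : ℕ} (hk : 1 ≤ k) {x : ℝ}
    (hx : 0 < x) (hirr : Irrational x) :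
    B (1 / (k + x)) = log (k + x) + B x / (k + x) := by
  have hk' : (1 : ℝ) ≤ k := by exact_mod_cast hk
  have hpos : 0 < (k : ℝ) + x := by linarith
  have hmem : 1 / ((k : ℝ) + x) ∈ Set.Ioo (0 : ℝ) 1 :=
    ⟨by positivity, (div_lt_one hpos).2 (by linarith)⟩
  have hirr' : Irrational (1 / ((k : ℝ) + x)) := by
    rw [one_div]; exact (hirr.natCast_add k).inv
  have hper : B (k + x) = B x := by
    simpa [add_comm] using hB.1.nat_mul k x
  rw [hB.2 _ hmem hirr', one_div_one_div, hper, one_div, log_inv]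
  ring

theorem abs_apply_sub_log_div_le (hB : IsBryunoType B) {q n : ℕ} (hq : 1 ≤ q) (hn : 1 ≤ n)
    {x : ℝ} (hx0 : 0 < x) (hx1 : x ≤ 1) (hirr : Irrational x) :
    |B (1 / (q + 1 / (n + x))) - log n / q| ≤ q + |B x| + 1 := by
  have hq' : (1 : ℝ) ≤ q := by exact_mod_cast hq
  have hn' : (1 : ℝ) ≤ n := by exact_mod_cast hn
  set t : ℝ := n + x
  have ht : 1 < t := by linarith
  have ht0 : 0 < t := by linarith
  have hu0 : 0 < 1 / t := by positivity
  have hu1 : 1 / t ≤ 1 := (div_le_one ht0).2 ht.le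
  have hu : Irrational (1 / t) := by rw [one_div]; exact (hirr.natCast_add n).inv
  have hBω : B (1 / (q + 1 / t)) - log n / q =
      log (q + 1 / t) + B x / (t * (q + 1 / t)) + (log t / (q + 1 / t) - log n / q) := by
    rw [hB.apply_one_div_natCast_add hq hu0 hu, hB.apply_one_div_natCast_add hn hx0 hirr]
    field_simp
    ring
  have hlog : |log (q + 1 / t)| ≤ q := by
    rw [abs_of_nonneg (log_nonneg (by linarith))]
    linarith [log_le_sub_one_of_pos (by linarith : (0 : ℝ) < q + 1 / t)]
  have hBx : |B x / (t * (q + 1 / t))| ≤ |B x| := by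
    rw [abs_div, abs_of_pos (by positivity : 0 < t * (q + 1 / t))]
    exact div_le_self (abs_nonneg _)
      (one_le_mul_of_one_le_of_one_le ht.le (by linarith : (1 : ℝ) ≤ q + 1 / t))
  have hmain := abs_log_div_add_one_div_sub_log_div_le hq' hn' (by linarith : (n : ℝ) ≤ t)
    (by linarith : t ≤ n + 1)
  rw [hBω]
  calc _ ≤ |log (q + 1 / t)| + |B x / (t * (q + 1 / t))| + |log t / (q + 1 / t) - log n / q| :=
        abs_add_three _ _ _
    _ ≤ q + |B x| + 1 := by gcongr

end IsBryunoType

theorem critical_function_scaling_near_resonance_general (B : ℝ → ℝ)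
    (hper : ∀ ω : ℝ, B (ω + 1) = B ω)
    (heq : ∀ ω : ℝ, ω ∈ Set.Ioo (0:ℝ) 1 → Irrational ω →
      B ω = -Real.log ω + ω * B (1 / ω))
    (q : ℕ) (hq : 1 ≤ q) (β : ℝ)
    (εc : ℝ → ℝ) (hpos : ∀ ω : ℝ, 0 < εc ω)
    (C₁ : ℝ)
    (hbound : ∀ n : ℕ, 1 ≤ n →
      |Real.log (εc (1 / ((q : ℝ) + 1 / ((n : ℝ) + (Real.sqrt 5 - 1) / 2)))) +
        β * B (1 / ((q : ℝ) + 1 / ((n : ℝ) + (Real.sqrt 5 - 1) / 2)))| ≤ C₁) :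
    ∃ c C : ℝ, 0 < c ∧ c ≤ C ∧ ∀ n : ℕ, 1 ≤ n →
      c * (n : ℝ) ^ (-(β / (q : ℝ))) ≤
        εc (1 / ((q : ℝ) + 1 / ((n : ℝ) + (Real.sqrt 5 - 1) / 2))) ∧
      εc (1 / ((q : ℝ) + 1 / ((n : ℝ) + (Real.sqrt 5 - 1) / 2))) ≤
        C * (n : ℝ) ^ (-(β / (q : ℝ))) := by
  have hB : IsBryunoType B := ⟨hper, heq⟩
  have hγ : -goldenConj = (√5 - 1) / 2 := by rw [goldenConj]; ring
  have hγ0 : 0 < (√5 - 1) / 2 := hγ ▸ neg_pos.2 goldenConj_neg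
  have hγ1 : (√5 - 1) / 2 ≤ 1 := hγ ▸ by linarith [neg_one_lt_goldenConj]
  have hγirr : Irrational ((√5 - 1) / 2) := hγ ▸ goldenConj_irrational.neg
  have hC₁ : 0 ≤ C₁ := (abs_nonneg _).trans (hbound 1 le_rfl)
  set K := C₁ + |β| * (q + |B ((√5 - 1) / 2)| + 1)
  refine ⟨exp (-K), exp K, exp_pos _, exp_le_exp.2 (neg_le_self (by positivity)), fun n hn ↦ ?_⟩
  set ω := 1 / ((q : ℝ) + 1 / ((n : ℝ) + (√5 - 1) / 2))
  refine rpow_neg_mul_le_and_le_of_abs_log_add_mul_log_le (by exact_mod_cast hn) (hpos ω) ?_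
  calc |log (εc ω) + β / q * log n| = |(log (εc ω) + β * B ω) - β * (B ω - log n / q)| := by
        ring_nf
    _ ≤ |log (εc ω) + β * B ω| + |β| * |B ω - log n / q| := by rw [← abs_mul]; exact abs_sub _ _
    _ ≤ K := add_le_add (hbound n hn) (mul_le_mul_of_nonneg_left
        (hB.abs_apply_sub_log_div_le hq hn hγ0 hγ1 hγirr) (abs_nonneg β))

/-- If `εc` is a positive function satisfying Bryuno's interpolation formula
`|log εc(ω_n) + β·B(ω_n)| ≤ C₁` along the sequence `ω_n = 1/(q + 1/(n+γ))`
(rotation numbers `[q,n,1,1,…]` tending to the resonance `1/q`) for a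
Bryuno-type function `B`, then `εc(ω_n)` scales as `n^(-β/q)`. -/
theorem critical_function_scaling_near_resonance (B : ℝ → ℝ)
    (hper : ∀ ω : ℝ, B (ω + 1) = B ω)
    (heq : ∀ ω : ℝ, ω ∈ Set.Ioo (0:ℝ) 1 → Irrational ω →
      B ω = -Real.log ω + ω * B (1 / ω))
    (q : ℕ) (hq : 1 ≤ q) (β : ℝ) (hβ : 0 < β)
    (εc : ℝ → ℝ) (hpos : ∀ ω : ℝ, 0 < εc ω)
    (C₁ : ℝ) (hC₁ : 0 < C₁)
    (hbound : ∀ n : ℕ, 1 ≤ n →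
      |Real.log (εc (1 / ((q : ℝ) + 1 / ((n : ℝ) + (Real.sqrt 5 - 1) / 2)))) +
        β * B (1 / ((q : ℝ) + 1 / ((n : ℝ) + (Real.sqrt 5 - 1) / 2)))| ≤ C₁) :
    ∃ c C : ℝ, 0 < c ∧ c ≤ C ∧ ∀ n : ℕ, 1 ≤ n →
      c * (n : ℝ) ^ (-(β / (q : ℝ))) ≤
        εc (1 / ((q : ℝ) + 1 / ((n : ℝ) + (Real.sqrt 5 - 1) / 2))) ∧
      εc (1 / ((q : ℝ) + 1 / ((n : ℝ) + (Real.sqrt 5 - 1) / 2))) ≤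
        C * (n : ℝ) ^ (-(β / (q : ℝ))) :=
  critical_function_scaling_near_resonance_general B hper heq q hq β εc hpos C₁ hbound
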